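/- Let p be a positive integer, q an integer coprime to p, and k a natural number. Then (1/p) · ∑_{l=1}^{p} exp(2πi·k·q·l²/p) = 1 if and only if p divides k. (Consequently p is recovered from the family of invariants as the smallest positive k for which the invariant equals 1.) -/

import Mathlib

/-!
With `ζ = exp (2πi / p)`, a primitive `p`-th root of unity, the sum is `∑ ζ ^ (k q l²)`, a sum of
`p` points of the unit circle. It equals `p` only if every term is `1`, i.e. `p ∣ k q l²` for all
`l`; taking `l = 1` and using that `q` is prime to `p`, this means `p ∣ k`.
-/

open Complex Finset

open scoped ComplexOrder in
lemma Complex.eq_one_of_norm_le_one_of_re_eq_one {z : ℂ} (hz : ‖z‖ ≤ 1) (hre : z.re = 1) :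
    z = 1 := by
  have hnonneg : 0 ≤ z := re_eq_norm.mp (le_antisymm (re_le_norm z) (hre ▸ hz))
  apply Complex.ext
  · simpa using hre
  · simpa using (nonneg_iff.mp hnonneg).2.symm

lemma Complex.sum_eq_card_iff_forall_eq_one {ι : Type*} {s : Finset ι} {z : ι → ℂ}
    (hz : ∀ i ∈ s, ‖z i‖ ≤ 1) : ∑ i ∈ s, z i = #s ↔ ∀ i ∈ s, z i = 1 := by
  refine ⟨fun hsum ↦ ?_, fun h ↦ by simp [sum_congr rfl h]⟩
  have hre_le : ∀ i ∈ s, (z i).re ≤ 1 := fun i hi ↦ (re_le_norm _).trans (hz i hi)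
  have hre_sum : ∑ i ∈ s, (z i).re = ∑ i ∈ s, (1 : ℝ) := by
    simpa using congrArg re hsum
  intro i hi
  exact eq_one_of_norm_le_one_of_re_eq_one (hz i hi)
    ((sum_eq_sum_iff_of_le hre_le).mp hre_sum i hi)

lemma forall_dvd_mul_sq_iff_dvd {p : ℕ} (hp : 0 < p) {a : ℤ} :
    (∀ l ∈ Icc 1 p, (p : ℤ) ∣ a * (l : ℤ) ^ 2) ↔ (p : ℤ) ∣ a :=
  ⟨fun h ↦ by simpa using h 1 (mem_Icc.mpr ⟨le_rfl, hp⟩), fun h _ _ ↦ h.mul_right _⟩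

theorem normalized_gauss_sum_eq_one_iff_dvd (p : ℕ) (hp : 0 < p) (q : ℤ)
    (hq : IsCoprime q (p : ℤ)) (k : ℕ) :
    (1 / (p : ℂ)) *
        (∑ l ∈ Finset.Icc 1 p,
          Complex.exp (2 * Real.pi * Complex.I * (k : ℂ) * (q : ℂ) * (l : ℂ) ^ 2 / (p : ℂ))) = 1 ↔
      p ∣ k := by
  set ζ := exp (2 * Real.pi * I / p)
  have hζ : IsPrimitiveRoot ζ p := isPrimitiveRoot_exp p hp.ne'
  have hterm (l : ℕ) :
      exp (2 * Real.pi * I * k * q * (l : ℂ) ^ 2 / p) = ζ ^ (k * q * l ^ 2 : ℤ) := by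
    rw [← exp_int_mul]
    push_cast
    ring_nf
  have hnorm (n : ℤ) : ‖ζ ^ n‖ ≤ 1 := by
    rw [norm_zpow, hζ.norm'_eq_one hp.ne', one_zpow]
  have hcard : ((#(Icc 1 p) : ℕ) : ℂ) = p := by simp
  rw [one_div, inv_mul_eq_one₀ (by exact_mod_cast hp.ne'), sum_congr rfl fun l _ ↦ hterm l,
    ← hcard, eq_comm, sum_eq_card_iff_forall_eq_one fun l _ ↦ hnorm _]
  simp_rw [hζ.zpow_eq_one_iff_dvd]
  rw [forall_dvd_mul_sq_iff_dvd hp, ← Int.natCast_dvd_natCast]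
  exact ⟨hq.symm.dvd_of_dvd_mul_right, (·.mul_right q)⟩
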